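/- Let H ∈ (1/2, 1) and β ∈ (1−H, H). Then sup_{v>0} √(Θ(v)) / v^{1−β} < ∞ and ∫_0^∞ √(Θ(y)) / y^{2−β} dy < ∞. -/

import Mathlib

/-!
Write `p = 2H ∈ (1, 2)` and let `F`, `G` be the odd first and even second primitives of `|t| ^ p`
(`absRpowPrim`, `absRpowPrim₂`); both are differentiable because `p > 1`, so the fundamental theorem of
calculus evaluates both integrals defining `Θ` and gives, for `x > 0`,
`Θ(x) = x^p + 2F(1) - F(1+x) - F(1-x) + G(1+x) + G(1-x) - 2G(1) - 2G(x)`.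
Both `Θ(x) ≤ x^p` and `Θ(x) ≤ 1` follow from the midpoint convexity
`2|a|^p ≤ |a+b|^p + |a-b|^p`: each is `φ(0) ≤ φ(1)` for a function `φ` whose derivative is
`t` times such a second difference. Hence `√Θ(v) ≤ min(v^H, 1)`, and the two claims reduce to
`1 - H < β < 1`: `v^(H-1+β)` is bounded near `0`, `v^(H-2+β)` is integrable near `0` and
`v^(β-2)` near `∞`.
-/

open MeasureTheory Filter Set

/-- The function `Θ(x)` from the paper, for Hurst parameter `H`. -/
noncomputable def Theta (H : ℝ) (x : ℝ) : ℝ :=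
  ∫ u in (0:ℝ)..1, ∫ s in (0:ℝ)..1,
    (x ^ (2*H) + 2 * u ^ (2*H) + |s - u + x| ^ (2*H)
      - (u + x) ^ (2*H) - |u - x| ^ (2*H) - |u - s| ^ (2*H))

theorem le_of_hasDerivAt_nonneg {g g' : ℝ → ℝ} {a b : ℝ} (hab : a ≤ b)
    (hg : ∀ t, HasDerivAt g (g' t) t) (hg' : ∀ t ∈ Ioo a b, 0 ≤ g' t) : g a ≤ g b := by
  refine monotoneOn_of_hasDerivWithinAt_nonneg (convex_Icc a b)
    (fun t _ => (hg t).continuousAt.continuousWithinAt) (fun t _ => (hg t).hasDerivWithinAt)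
    (by simpa using hg') (left_mem_Icc.2 hab) (right_mem_Icc.2 hab) hab

theorem two_mul_abs_rpow_le {p : ℝ} (hp : 1 ≤ p) (a b : ℝ) :
    2 * |a| ^ p ≤ |a + b| ^ p + |a - b| ^ p := by
  have hmid : |a| ≤ (1 / 2) * |a + b| + (1 / 2) * |a - b| := by
    have := abs_add_le (a + b) (a - b)
    rw [show a + b + (a - b) = 2 * a by ring, abs_mul, abs_two] at this
    linarith
  have hconv := (convexOn_rpow hp).2 (mem_Ici.2 (abs_nonneg (a + b)))
    (mem_Ici.2 (abs_nonneg (a - b))) (by norm_num : (0:ℝ) ≤ 1 / 2)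
    (by norm_num : (0:ℝ) ≤ 1 / 2) (by norm_num)
  simp only [smul_eq_mul] at hconv
  have := Real.rpow_le_rpow (abs_nonneg a) hmid (by linarith : (0:ℝ) ≤ p)
  linarith

noncomputable def absRpowPrim (p t : ℝ) : ℝ := t * |t| ^ p / (p + 1)

noncomputable def absRpowPrim₂ (p t : ℝ) : ℝ := |t| ^ (p + 2) / ((p + 1) * (p + 2))

section Primitives

variable {p : ℝ}

theorem abs_rpow_sub_two_mul_self_mul_self (hp : p ≠ 0) (t : ℝ) :
    |t| ^ (p - 2) * t * t = |t| ^ p := by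
  rcases eq_or_ne t 0 with rfl | ht
  · simp [Real.zero_rpow hp]
  · rw [mul_assoc, ← abs_mul_abs_self, ← sq, ← Real.rpow_natCast,
      ← Real.rpow_add (abs_pos.2 ht)]
    norm_num

theorem hasDerivAt_absRpowPrim (hp : 1 < p) (t : ℝ) :
    HasDerivAt (absRpowPrim p) (|t| ^ p) t := by
  refine (((hasDerivAt_id' t).mul (hasDerivAt_abs_rpow t hp)).div_const (p + 1)).congr_deriv ?_
  have := abs_rpow_sub_two_mul_self_mul_self (p := p) (by linarith) t
  field_simp
  linear_combination p * this

theorem hasDerivAt_absRpowPrim₂ (hp : 1 < p) (t : ℝ) :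
    HasDerivAt (absRpowPrim₂ p) (absRpowPrim p t) t := by
  refine ((hasDerivAt_abs_rpow t (by linarith : 1 < p + 2)).div_const
    ((p + 1) * (p + 2))).congr_deriv ?_
  rw [absRpowPrim, add_sub_cancel_right]
  field_simp

@[fun_prop]
theorem continuous_absRpowPrim (hp : 1 < p) : Continuous (absRpowPrim p) :=
  continuous_iff_continuousAt.2 fun t => (hasDerivAt_absRpowPrim hp t).continuousAt

@[fun_prop]
theorem continuous_absRpowPrim₂ (hp : 1 < p) : Continuous (absRpowPrim₂ p) :=
  continuous_iff_continuousAt.2 fun t => (hasDerivAt_absRpowPrim₂ hp t).continuousAt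

theorem absRpowPrim_neg (t : ℝ) : absRpowPrim p (-t) = -absRpowPrim p t := by
  simp only [absRpowPrim, abs_neg]
  ring

theorem absRpowPrim₂_neg (t : ℝ) : absRpowPrim₂ p (-t) = absRpowPrim₂ p t := by
  simp only [absRpowPrim₂, abs_neg]

theorem absRpowPrim_zero : absRpowPrim p 0 = 0 := by
  simp [absRpowPrim]

theorem absRpowPrim₂_zero (hp : p + 2 ≠ 0) : absRpowPrim₂ p 0 = 0 := by
  simp [absRpowPrim₂, Real.zero_rpow hp]

noncomputable def thetaClosedForm (p x : ℝ) : ℝ :=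
  |x| ^ p + 2 * absRpowPrim p 1 - absRpowPrim p (1 + x) - absRpowPrim p (1 - x)
    + absRpowPrim₂ p (1 + x) + absRpowPrim₂ p (1 - x) - 2 * absRpowPrim₂ p 1 - 2 * absRpowPrim₂ p x

theorem integral_theta_integrand (hp : 1 < p) (x u : ℝ) :
    ∫ s in (0:ℝ)..1, (x ^ p + 2 * u ^ p + |s - u + x| ^ p
      - (u + x) ^ p - |u - x| ^ p - |u - s| ^ p)
    = x ^ p + 2 * u ^ p - (u + x) ^ p - |u - x| ^ p
      + (absRpowPrim p (1 - u + x) - absRpowPrim p (x - u))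
      - (absRpowPrim p (1 - u) - absRpowPrim p (-u)) := by
  set c := x ^ p + 2 * u ^ p - (u + x) ^ p - |u - x| ^ p
  have hderiv : ∀ s : ℝ,
      HasDerivAt (fun s => c * s + absRpowPrim p (s - u + x) - absRpowPrim p (s - u))
      (x ^ p + 2 * u ^ p + |s - u + x| ^ p - (u + x) ^ p - |u - x| ^ p - |u - s| ^ p) s := by
    intro s
    have hx := (hasDerivAt_absRpowPrim hp _).comp s (((hasDerivAt_id' s).sub_const u).add_const x)
    have hu := (hasDerivAt_absRpowPrim hp _).comp s ((hasDerivAt_id' s).sub_const u)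
    refine ((((hasDerivAt_id' s).const_mul c).add hx).sub hu).congr_deriv ?_
    rw [abs_sub_comm u s]
    ring
  rw [intervalIntegral.integral_eq_sub_of_hasDerivAt (fun s _ => hderiv s)
    (by apply Continuous.intervalIntegrable; fun_prop (disch := positivity))]
  simp only [mul_one, mul_zero, zero_sub, zero_add, neg_add_eq_sub]
  ring

end Primitives

theorem theta_eq_thetaClosedForm {H x : ℝ} (hH : 1 / 2 < H) (hx : 0 < x) :
    Theta H x = thetaClosedForm (2 * H) x := by
  have hp : 1 < 2 * H := by linarith
  set p := 2 * H
  have hderiv : ∀ u ∈ uIcc (0:ℝ) 1, HasDerivAt (fun u => x ^ p * u + 2 * absRpowPrim p u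
      - absRpowPrim p (u + x) - absRpowPrim p (u - x) - absRpowPrim₂ p (1 - u + x)
      + absRpowPrim₂ p (x - u) + absRpowPrim₂ p (1 - u) - absRpowPrim₂ p (-u))
      (x ^ p + 2 * u ^ p - (u + x) ^ p - |u - x| ^ p
        + (absRpowPrim p (1 - u + x) - absRpowPrim p (x - u))
        - (absRpowPrim p (1 - u) - absRpowPrim p (-u))) u := by
    intro u hu
    have hu0 : 0 ≤ u := by rw [uIcc_of_le zero_le_one] at hu; exact hu.1
    have hid := hasDerivAt_id' u
    have h1 := hasDerivAt_absRpowPrim hp u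
    have h2 := (hasDerivAt_absRpowPrim hp _).comp u (hid.add_const x)
    have h3 := (hasDerivAt_absRpowPrim hp _).comp u (hid.sub_const x)
    have h4 := (hasDerivAt_absRpowPrim₂ hp _).comp u ((hid.const_sub 1).add_const x)
    have h5 := (hasDerivAt_absRpowPrim₂ hp _).comp u (hid.const_sub x)
    have h6 := (hasDerivAt_absRpowPrim₂ hp _).comp u (hid.const_sub 1)
    have h7 := (hasDerivAt_absRpowPrim₂ hp _).comp u (hasDerivAt_neg u)
    refine ((((((((hid.const_mul (x ^ p)).add (h1.const_mul 2)).sub h2).sub h3).sub h4).add h5).add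
      h6).sub h7).congr_deriv ?_
    rw [abs_of_nonneg hu0, abs_of_nonneg (by linarith : 0 ≤ u + x)]
    ring
  rw [Theta, intervalIntegral.integral_congr (fun u _ => integral_theta_integrand hp x u),
    intervalIntegral.integral_eq_sub_of_hasDerivAt hderiv
      (by apply Continuous.intervalIntegrable; fun_prop (disch := first | assumption | linarith))]
  have hG : absRpowPrim₂ p (x - 1) = absRpowPrim₂ p (1 - x) := by rw [← neg_sub, absRpowPrim₂_neg]
  simp only [sub_self, zero_add, zero_sub, sub_zero, neg_zero, mul_zero, mul_one, hG,
    absRpowPrim_neg, absRpowPrim₂_neg, absRpowPrim_zero,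
    absRpowPrim₂_zero (by linarith : p + 2 ≠ 0)]
  rw [thetaClosedForm, abs_of_pos hx]
  ring

section Bounds

variable {p : ℝ}

theorem thetaClosedForm_le_abs_rpow (hp : 1 < p) (x : ℝ) : thetaClosedForm p x ≤ |x| ^ p := by
  have hderiv : ∀ t, HasDerivAt
      (fun t => 2 * absRpowPrim₂ p t - absRpowPrim₂ p (t + x) - absRpowPrim₂ p (t - x)
        - t * (2 * absRpowPrim p t - absRpowPrim p (t + x) - absRpowPrim p (t - x)))
      (t * (|t + x| ^ p + |t - x| ^ p - 2 * |t| ^ p)) t := by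
    intro t
    have hF := (hasDerivAt_absRpowPrim hp t).const_mul 2
    have hFx := (hasDerivAt_absRpowPrim hp (t + x)).comp_add_const t x
    have hFx' := (hasDerivAt_absRpowPrim hp (t - x)).comp_sub_const t x
    have hG := (hasDerivAt_absRpowPrim₂ hp t).const_mul 2
    have hGx := (hasDerivAt_absRpowPrim₂ hp (t + x)).comp_add_const t x
    have hGx' := (hasDerivAt_absRpowPrim₂ hp (t - x)).comp_sub_const t x
    refine (((hG.sub hGx).sub hGx').sub
      ((hasDerivAt_id' t).mul ((hF.sub hFx).sub hFx'))).congr_deriv ?_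
    simp only [Pi.sub_apply]
    ring
  have hmono := le_of_hasDerivAt_nonneg zero_le_one hderiv fun t ht =>
    mul_nonneg ht.1.le (by linarith [two_mul_abs_rpow_le hp.le t x])
  simp only [zero_add, zero_sub, absRpowPrim₂_neg, absRpowPrim₂_zero (by linarith : p + 2 ≠ 0),
    zero_mul, one_mul, mul_zero, sub_zero] at hmono
  rw [thetaClosedForm]
  linarith

theorem thetaClosedForm_le_one (hp : 1 < p) (x : ℝ) : thetaClosedForm p x ≤ 1 := by
  have hderiv : ∀ s, HasDerivAt
      (fun s => s * (absRpowPrim p (x + s) - absRpowPrim p (x - s))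
        - (absRpowPrim₂ p (x + s) + absRpowPrim₂ p (x - s) - 2 * absRpowPrim₂ p x)
        - s ^ 2 * |x| ^ p)
      (s * (|x + s| ^ p + |x - s| ^ p - 2 * |x| ^ p)) s := by
    intro s
    have hFx := (hasDerivAt_absRpowPrim hp (x + s)).comp_const_add x s
    have hFx' := (hasDerivAt_absRpowPrim hp (x - s)).comp_const_sub x s
    have hGx := (hasDerivAt_absRpowPrim₂ hp (x + s)).comp_const_add x s
    have hGx' := (hasDerivAt_absRpowPrim₂ hp (x - s)).comp_const_sub x s
    refine ((((hasDerivAt_id' s).mul (hFx.sub hFx')).sub ((hGx.add hGx').sub_const _)).sub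
      ((hasDerivAt_pow 2 s).mul_const _)).congr_deriv ?_
    simp only [Pi.sub_apply]
    ring
  have hmono := le_of_hasDerivAt_nonneg zero_le_one hderiv fun s hs =>
    mul_nonneg hs.1.le (by linarith [two_mul_abs_rpow_le hp.le x s])
  have hF : absRpowPrim p (x - 1) = -absRpowPrim p (1 - x) := by rw [← neg_sub, absRpowPrim_neg]
  have hG : absRpowPrim₂ p (x - 1) = absRpowPrim₂ p (1 - x) := by rw [← neg_sub, absRpowPrim₂_neg]
  have hF1 : 2 * absRpowPrim p 1 ≤ 1 := by
    rw [absRpowPrim, abs_one, Real.one_rpow, mul_one, mul_one_div, div_le_one (by linarith)]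
    linarith
  have hG1 : 0 ≤ absRpowPrim₂ p 1 :=
    div_nonneg (Real.rpow_nonneg (abs_nonneg 1) _) (by nlinarith)
  simp only [add_zero, sub_zero, sub_self, zero_mul, zero_pow two_ne_zero, one_mul, one_pow,
    hF, hG] at hmono
  rw [thetaClosedForm, add_comm 1 x]
  linarith

theorem continuous_thetaClosedForm (hp : 1 < p) : Continuous (thetaClosedForm p) := by
  unfold thetaClosedForm
  fun_prop (disch := first | assumption | linarith)

end Bounds

theorem integrableOn_Ioi_of_norm_le_rpow {g : ℝ → ℝ} {a b : ℝ} (ha : -1 < a) (hb : b < -1)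
    (hg : ContinuousOn g (Ioi 0)) (h₀ : ∀ y ∈ Ioc 0 1, ‖g y‖ ≤ y ^ a)
    (h₁ : ∀ y ∈ Ioi 1, ‖g y‖ ≤ y ^ b) : IntegrableOn g (Ioi 0) := by
  rw [← Ioc_union_Ioi_eq_Ioi zero_le_one]
  refine IntegrableOn.union ?_ ?_
  · exact Integrable.mono'
      ((intervalIntegrable_iff_integrableOn_Ioc_of_le zero_le_one).1
        (intervalIntegral.intervalIntegrable_rpow' ha))
      ((hg.mono Ioc_subset_Ioi_self).aestronglyMeasurable measurableSet_Ioc)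
      ((ae_restrict_iff' measurableSet_Ioc).2 (.of_forall h₀))
  · exact Integrable.mono' (integrableOn_Ioi_rpow_of_lt hb one_pos)
      ((hg.mono (Ioi_subset_Ioi zero_le_one)).aestronglyMeasurable measurableSet_Ioi)
      ((ae_restrict_iff' measurableSet_Ioi).2 (.of_forall h₁))

section Theta

variable {H : ℝ}

theorem continuousOn_theta (hH : 1 / 2 < H) : ContinuousOn (Theta H) (Ioi 0) :=
  (continuous_thetaClosedForm (by linarith)).continuousOn.congr fun _ hx =>
    theta_eq_thetaClosedForm hH hx

theorem sqrt_theta_le_rpow (hH : 1 / 2 < H) {x : ℝ} (hx : 0 < x) : √(Theta H x) ≤ x ^ H := by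
  rw [Real.sqrt_le_left (Real.rpow_nonneg hx.le H), ← Real.rpow_natCast, ← Real.rpow_mul hx.le,
    theta_eq_thetaClosedForm hH hx]
  simpa [abs_of_pos hx, mul_comm] using thetaClosedForm_le_abs_rpow (by linarith : 1 < 2 * H) x

theorem sqrt_theta_le_one (hH : 1 / 2 < H) {x : ℝ} (hx : 0 < x) : √(Theta H x) ≤ 1 := by
  rw [Real.sqrt_le_one, theta_eq_thetaClosedForm hH hx]
  exact thetaClosedForm_le_one (by linarith) x

theorem sqrt_theta_div_rpow_le (hH : 1 / 2 < H) {x : ℝ} (hx : 0 < x) (c : ℝ) :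
    √(Theta H x) / x ^ c ≤ x ^ (H - c) ∧ √(Theta H x) / x ^ c ≤ x ^ (-c) := by
  have hxc := Real.rpow_pos_of_pos hx c
  constructor
  · rw [Real.rpow_sub hx]
    exact div_le_div_of_nonneg_right (sqrt_theta_le_rpow hH hx) hxc.le
  · rw [Real.rpow_neg hx.le, ← one_div]
    exact div_le_div_of_nonneg_right (sqrt_theta_le_one hH hx) hxc.le

end Theta

theorem stmt14 (H β : ℝ) (hH : H ∈ Set.Ioo (1/2 : ℝ) 1) (hβ : β ∈ Set.Ioo (1 - H) H) :
    (∃ M : ℝ, ∀ v > (0:ℝ), Real.sqrt (Theta H v) / v ^ (1 - β) ≤ M) ∧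
    IntegrableOn (fun y : ℝ => Real.sqrt (Theta H y) / y ^ (2 - β)) (Set.Ioi 0) := by
  obtain ⟨hH₁, hH₂⟩ := hH
  obtain ⟨hβ₁, hβ₂⟩ := hβ
  refine ⟨⟨1, fun v hv => ?_⟩, ?_⟩
  · rcases le_or_gt v 1 with hv₁ | hv₁
    · exact (sqrt_theta_div_rpow_le hH₁ hv _).1.trans (Real.rpow_le_one hv.le hv₁ (by linarith))
    · exact (sqrt_theta_div_rpow_le hH₁ hv _).2.trans
        (Real.rpow_le_one_of_one_le_of_nonpos hv₁.le (by linarith))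
  · have hnonneg : ∀ y > (0:ℝ), 0 ≤ √(Theta H y) / y ^ (2 - β) := fun y hy =>
      div_nonneg (Real.sqrt_nonneg _) (Real.rpow_nonneg hy.le _)
    refine integrableOn_Ioi_of_norm_le_rpow (a := H - (2 - β)) (b := -(2 - β))
      (by linarith) (by linarith) ?_ (fun y hy => ?_) (fun y hy => ?_)
    · exact (continuousOn_theta hH₁).sqrt.div (continuousOn_id.rpow_const fun _ _ => Or.inr
        (by linarith)) fun y hy => (Real.rpow_pos_of_pos hy _).ne'
    · rw [Real.norm_of_nonneg (hnonneg y hy.1)]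
      exact (sqrt_theta_div_rpow_le hH₁ hy.1 _).1
    · rw [Real.norm_of_nonneg (hnonneg y (zero_lt_one.trans hy))]
      exact (sqrt_theta_div_rpow_le hH₁ (zero_lt_one.trans hy) _).2
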